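/- arXiv:2312.08783 — 2 statements merged into one kernel-verified Lean document; each statement's English description precedes it below -/
import Mathlib

section
/- If W : ℝ^{d×d} → [0,∞] is continuous, finite and C² in a neighborhood of the identity, satisfies W(I) = 0, and satisfies the coercivity bound W(F) ≥ C̄ · dist²(F, SO(d)) for all F, then for every matrix F one has (1/2)·Fᵀ D²W(I) F ≥ C̄ |sym F|², where sym F = (F + Fᵀ)/2 and D²W(I) denotes the second derivative of W at the identity viewed as a quadratic form on ℝ^{d×d}. -/
/-!
Along the line `t ↦ 1 + t F`, the quotient `W (1 + t F) / t²` tends to `½ D²W(1)[F, F]` as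
`t → 0⁺` (l'Hôpital, using `W 1 = 0` and `DW(1) = 0`). For a rotation `R` the symmetric part of
`R - 1` is quadratically small, since `(R - 1)ᵀ (R - 1) = -2 sym (R - 1)`; hence
`dist (1 + t F, SO(d)) ≥ t |sym F| - 2 t² |F|²`, and coercivity bounds the quotient from below by
`C̄ |sym F|² - O(t)`.
-/

open Matrix Filter Topology

attribute [local instance] Matrix.frobeniusNormedAddCommGroup Matrix.frobeniusNormedSpace

theorem tendsto_div_sq_nhdsGT_of_hasDerivAt {g g' : ℝ → ℝ} {a : ℝ} (hg0 : g 0 = 0)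
    (hg : ∀ᶠ t in 𝓝 0, HasDerivAt g (g' t) t) (hg'0 : g' 0 = 0) (hg' : HasDerivAt g' a 0) :
    Tendsto (fun t => g t / t ^ 2) (𝓝[>] 0) (𝓝 (a / 2)) := by
  have hslope : Tendsto (fun t => g' t / (2 * t)) (𝓝[>] 0) (𝓝 (a / 2)) := by
    have := (hasDerivAt_iff_tendsto_slope.mp hg').mono_left
      (nhdsWithin_mono 0 fun t (ht : 0 < t) => ht.ne')
    refine (this.div_const 2).congr fun t => ?_
    rw [slope_def_field, hg'0, sub_zero, sub_zero, div_div, mul_comm]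
  have hg_cont : Tendsto g (𝓝[>] 0) (𝓝 0) := by
    simpa [hg0] using (hg.self_of_nhds.continuousAt.continuousWithinAt (s := Set.Ioi 0)).tendsto
  have hsq_cont : Tendsto (fun t : ℝ => t ^ 2) (𝓝[>] 0) (𝓝 0) := by
    simpa using ((continuous_pow 2).tendsto (0 : ℝ)).mono_left nhdsWithin_le_nhds
  refine HasDerivAt.lhopital_zero_nhdsGT (hg.filter_mono nhdsWithin_le_nhds)
    (Eventually.of_forall fun t => by simpa using hasDerivAt_pow 2 t) ?_ hg_cont hsq_cont hslope
  filter_upwards [self_mem_nhdsWithin] with t (ht : 0 < t)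
  positivity

theorem ContDiffAt.tendsto_div_sq_iteratedFDeriv_two {E : Type*} [NormedAddCommGroup E]
    [NormedSpace ℝ E] {f : E → ℝ} {x : E} (hf : ContDiffAt ℝ 2 f x) (hfx : f x = 0)
    (hDf : fderiv ℝ f x = 0) (v : E) :
    Tendsto (fun t : ℝ => f (x + t • v) / t ^ 2) (𝓝[>] 0)
      (𝓝 (iteratedFDeriv ℝ 2 f x ![v, v] / 2)) := by
  have hline : ∀ t : ℝ, HasDerivAt (fun t : ℝ => x + t • v) v t := fun t => by
    simpa using ((hasDerivAt_id t).smul_const v).const_add x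
  have hline_tendsto : Tendsto (fun t : ℝ => x + t • v) (𝓝 0) (𝓝 x) := by
    simpa using (hline 0).continuousAt.tendsto
  have hdiff : ∀ᶠ y in 𝓝 x, DifferentiableAt ℝ f y :=
    (hf.eventually (by simp)).mono fun y hy => hy.differentiableAt (by norm_num)
  have hDf_diff : DifferentiableAt ℝ (fderiv ℝ f) x :=
    (hf.fderiv_right (m := 1) (by norm_num)).differentiableAt one_ne_zero
  refine tendsto_div_sq_nhdsGT_of_hasDerivAt (g' := fun t => fderiv ℝ f (x + t • v) v)
    (by simpa using hfx) ?_ (by simp [hDf]) ?_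
  · filter_upwards [hline_tendsto.eventually hdiff] with t ht
    exact ht.hasFDerivAt.comp_hasDerivAt t (hline t)
  · have hDf_line :
        HasDerivAt (fun t : ℝ => fderiv ℝ f (x + t • v)) (fderiv ℝ (fderiv ℝ f) x v) 0 :=
      (by simpa using hDf_diff.hasFDerivAt : HasFDerivAt _ _ (x + (0 : ℝ) • v)).comp_hasDerivAt 0
        (hline 0)
    simpa [iteratedFDeriv_two_apply] using hDf_line.clm_apply (hasDerivAt_const 0 v)

section Orthogonal

variable {n : Type*} [Fintype n] [DecidableEq n]

theorem norm_symm_sub_one_le_of_transpose_mul_self {R : Matrix n n ℝ} (hR : Rᵀ * R = 1) :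
    ‖(1 / 2 : ℝ) • ((R - 1) + (R - 1)ᵀ)‖ ≤ 1 / 2 * ‖R - 1‖ ^ 2 := by
  have hsymm : (1 / 2 : ℝ) • ((R - 1) + (R - 1)ᵀ) = -((1 / 2 : ℝ) • ((R - 1)ᵀ * (R - 1))) := by
    have : (R - 1)ᵀ * (R - 1) = Rᵀ * R - Rᵀ - R + 1 := by
      simp only [transpose_sub, transpose_one, sub_mul, mul_sub, mul_one, one_mul]
      abel
    rw [this, hR, transpose_sub, transpose_one]
    module
  calc ‖(1 / 2 : ℝ) • ((R - 1) + (R - 1)ᵀ)‖ = 1 / 2 * ‖(R - 1)ᵀ * (R - 1)‖ := by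
        rw [hsymm, norm_neg, norm_smul]; norm_num
    _ ≤ 1 / 2 * (‖(R - 1)ᵀ‖ * ‖R - 1‖) := by gcongr; exact frobenius_norm_mul _ _
    _ = 1 / 2 * ‖R - 1‖ ^ 2 := by rw [frobenius_norm_transpose, sq]

theorem norm_symm_le_infDist_one_add {S : Set (Matrix n n ℝ)} (hS : IsClosed S) (h1 : 1 ∈ S)
    (hSorth : ∀ R ∈ S, Rᵀ * R = 1) (A : Matrix n n ℝ) :
    ‖(1 / 2 : ℝ) • (A + Aᵀ)‖ ≤ Metric.infDist (1 + A) S + 2 * ‖A‖ ^ 2 := by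
  obtain ⟨R, hRS, hR⟩ := hS.exists_infDist_eq_dist ⟨1, h1⟩ (1 + A)
  have hdist_le : dist (1 + A) R ≤ ‖A‖ := by
    simpa [hR, dist_eq_norm] using Metric.infDist_le_dist_of_mem (x := 1 + A) h1
  have hR1 : ‖R - 1‖ ≤ 2 * ‖A‖ := by
    calc ‖R - 1‖ = ‖A - (1 + A - R)‖ := by congr 1; abel
      _ ≤ ‖A‖ + dist (1 + A) R := by rw [dist_eq_norm]; exact norm_sub_le _ _
      _ ≤ 2 * ‖A‖ := by linarith
  have hsplit : (1 / 2 : ℝ) • (A + Aᵀ) = (1 / 2 : ℝ) • ((1 + A - R) + (1 + A - R)ᵀ)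
      + (1 / 2 : ℝ) • ((R - 1) + (R - 1)ᵀ) := by
    simp only [transpose_sub, transpose_add, transpose_one]
    module
  have hsymm_le : ‖(1 / 2 : ℝ) • ((1 + A - R) + (1 + A - R)ᵀ)‖ ≤ dist (1 + A) R := by
    rw [norm_smul, dist_eq_norm]
    calc ‖(1 / 2 : ℝ)‖ * ‖(1 + A - R) + (1 + A - R)ᵀ‖
        ≤ 1 / 2 * (‖1 + A - R‖ + ‖(1 + A - R)ᵀ‖) := by norm_num; exact norm_add_le _ _
      _ = ‖1 + A - R‖ := by rw [frobenius_norm_transpose]; ring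
  calc ‖(1 / 2 : ℝ) • (A + Aᵀ)‖
      ≤ dist (1 + A) R + 1 / 2 * ‖R - 1‖ ^ 2 := by
        rw [hsplit]
        exact (norm_add_le _ _).trans
          (add_le_add hsymm_le (norm_symm_sub_one_le_of_transpose_mul_self (hSorth R hRS)))
    _ ≤ Metric.infDist (1 + A) S + 2 * ‖A‖ ^ 2 := by
        rw [hR]; nlinarith [norm_nonneg (R - 1)]

end Orthogonal

theorem isClosed_setOf_transpose_mul_self_eq_one_and_det_eq_one {n : Type*} [Fintype n]
    [DecidableEq n] : IsClosed {R : Matrix n n ℝ | Rᵀ * R = 1 ∧ R.det = 1} :=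
  (isClosed_eq (by fun_prop) continuous_const).inter
    (isClosed_eq (continuous_id.matrix_det) continuous_const)

theorem sq_sub_two_mul_le_sq_of_le_add {a b δ : ℝ} (ha : 0 ≤ a) (h : a ≤ δ + b) :
    a ^ 2 - 2 * a * b ≤ δ ^ 2 := by
  rcases le_or_gt a b with hab | hab
  · nlinarith
  · nlinarith [pow_le_pow_left₀ (sub_nonneg.mpr hab.le) (sub_le_iff_le_add.mpr h) 2, sq_nonneg b]

theorem stmt_4_general {d : ℕ} (W : Matrix (Fin d) (Fin d) ℝ → ℝ) (Cbar : ℝ)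
    (hC : 0 < Cbar)
    (hW2 : ContDiffAt ℝ 2 W 1) (hWI : W 1 = 0) (hDWI : fderiv ℝ W 1 = 0)
    (hcoer : ∀ F : Matrix (Fin d) (Fin d) ℝ,
      Cbar * (Metric.infDist F {R : Matrix (Fin d) (Fin d) ℝ | Rᵀ * R = 1 ∧ R.det = 1}) ^ 2
        ≤ W F) :
    ∀ F : Matrix (Fin d) (Fin d) ℝ,
      Cbar * ‖(1 / 2 : ℝ) • (F + Fᵀ)‖ ^ 2
        ≤ (1 / 2 : ℝ) * iteratedFDeriv ℝ 2 W 1 ![F, F] := by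
  intro F
  set s := ‖(1 / 2 : ℝ) • (F + Fᵀ)‖
  have hlow : ∀ t : ℝ, 0 < t →
      Cbar * (s ^ 2 - 4 * t * s * ‖F‖ ^ 2) ≤ W (1 + t • F) / t ^ 2 := by
    intro t ht
    have hdist := norm_symm_le_infDist_one_add
      (S := {R : Matrix (Fin d) (Fin d) ℝ | Rᵀ * R = 1 ∧ R.det = 1})
      isClosed_setOf_transpose_mul_self_eq_one_and_det_eq_one ⟨by simp, det_one⟩
      (fun R hR => hR.1) (t • F)
    have hsymm : ‖(1 / 2 : ℝ) • (t • F + (t • F)ᵀ)‖ = t * s := by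
      rw [transpose_smul, ← smul_add, smul_comm, norm_smul, Real.norm_of_nonneg ht.le]
    have hnorm : ‖t • F‖ ^ 2 = t ^ 2 * ‖F‖ ^ 2 := by
      rw [norm_smul, Real.norm_of_nonneg ht.le, mul_pow]
    rw [hsymm, hnorm] at hdist
    have hsq := sq_sub_two_mul_le_sq_of_le_add (by positivity) hdist
    rw [le_div_iff₀ (by positivity)]
    nlinarith [hcoer (1 + t • F)]
  have hlow_tendsto : Tendsto (fun t : ℝ => Cbar * (s ^ 2 - 4 * t * s * ‖F‖ ^ 2)) (𝓝[>] 0)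
      (𝓝 (Cbar * s ^ 2)) := by
    have : Continuous fun t : ℝ => Cbar * (s ^ 2 - 4 * t * s * ‖F‖ ^ 2) := by fun_prop
    simpa using this.continuousAt.tendsto.mono_left (nhdsWithin_le_nhds (a := (0 : ℝ)))
  have hlimit := le_of_tendsto_of_tendsto hlow_tendsto
    (hW2.tendsto_div_sq_iteratedFDeriv_two hWI hDWI F) (eventually_nhdsWithin_of_forall hlow)
  linarith

/-- If `W ≥ 0` is continuous, `C²` near the identity, `W(I) = 0`, `DW(I) = 0`, and
`W(F) ≥ C̄ dist²(F, SO(d))`, then `(1/2) Fᵀ D²W(I) F ≥ C̄ |sym F|²` for all `F`. -/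
theorem stmt_4 {d : ℕ} (hd : 2 ≤ d) (W : Matrix (Fin d) (Fin d) ℝ → ℝ) (Cbar : ℝ)
    (hC : 0 < Cbar) (hWcont : Continuous W) (hWnn : ∀ F, 0 ≤ W F)
    (hW2 : ContDiffAt ℝ 2 W 1) (hWI : W 1 = 0) (hDWI : fderiv ℝ W 1 = 0)
    (hcoer : ∀ F : Matrix (Fin d) (Fin d) ℝ,
      Cbar * (Metric.infDist F {R : Matrix (Fin d) (Fin d) ℝ | Rᵀ * R = 1 ∧ R.det = 1}) ^ 2
        ≤ W F) :
    ∀ F : Matrix (Fin d) (Fin d) ℝ,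
      Cbar * ‖(1 / 2 : ℝ) • (F + Fᵀ)‖ ^ 2
        ≤ (1 / 2 : ℝ) * iteratedFDeriv ℝ 2 W 1 ![F, F] :=
  stmt_4_general W Cbar hC hW2 hWI hDWI hcoer
end

section
/- For every d×d matrix F with positive determinant, the distance of F to the special orthogonal group equals |√(FᵀF) − I|, i.e., dist(F, SO(d)) = |√(FᵀF) − I| in the Frobenius norm. -/
open Matrix

attribute [local instance] Matrix.frobeniusNormedAddCommGroup Matrix.frobeniusNormedSpace

section
open scoped ComplexOrder
noncomputable def Matrix.PosSemidef.sqrt {n : Type*} [Fintype n] [DecidableEq n] {𝕜 : Type*}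
    [RCLike 𝕜] {A : Matrix n n 𝕜} (hA : A.PosSemidef) : Matrix n n 𝕜 :=
  hA.1.eigenvectorUnitary.1 * diagonal ((↑) ∘ Real.sqrt ∘ hA.1.eigenvalues) *
  (star hA.1.eigenvectorUnitary : Matrix n n 𝕜)

end

section SqrtAux
open scoped ComplexOrder
lemma Matrix.PosSemidef.posSemidef_sqrt {n : Type*} [Fintype n] [DecidableEq n] {𝕜 : Type*}
    [RCLike 𝕜] {A : Matrix n n 𝕜} (hA : A.PosSemidef) : hA.sqrt.PosSemidef := by
  unfold Matrix.PosSemidef.sqrt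
  have hD : (diagonal ((↑) ∘ Real.sqrt ∘ hA.1.eigenvalues) : Matrix n n 𝕜).PosSemidef := by
    rw [posSemidef_diagonal_iff]
    intro i
    simp only [Function.comp_apply, RCLike.ofReal_nonneg]
    exact Real.sqrt_nonneg _
  have := hD.mul_mul_conjTranspose_same (hA.1.eigenvectorUnitary : Matrix n n 𝕜)
  simpa [star_eq_conjTranspose] using this
lemma Matrix.PosSemidef.sqrt_mul_self {n : Type*} [Fintype n] [DecidableEq n] {𝕜 : Type*}
    [RCLike 𝕜] {A : Matrix n n 𝕜} (hA : A.PosSemidef) : hA.sqrt * hA.sqrt = A := by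
  unfold Matrix.PosSemidef.sqrt
  set V := hA.1.eigenvectorUnitary
  have hV : (star V : Matrix n n 𝕜) * (V : Matrix n n 𝕜) = 1 := Unitary.coe_star_mul_self V
  calc (V : Matrix n n 𝕜) * diagonal ((↑) ∘ Real.sqrt ∘ hA.1.eigenvalues) * (star V : Matrix n n 𝕜)
        * ((V : Matrix n n 𝕜) * diagonal ((↑) ∘ Real.sqrt ∘ hA.1.eigenvalues) * (star V : Matrix n n 𝕜))
      = (V : Matrix n n 𝕜) * (diagonal ((↑) ∘ Real.sqrt ∘ hA.1.eigenvalues)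
        * ((star V : Matrix n n 𝕜) * (V : Matrix n n 𝕜)) * diagonal ((↑) ∘ Real.sqrt ∘ hA.1.eigenvalues)) * (star V : Matrix n n 𝕜) := by
        simp only [Matrix.mul_assoc]
    _ = (V : Matrix n n 𝕜) * diagonal (RCLike.ofReal ∘ hA.1.eigenvalues) * (star V : Matrix n n 𝕜) := by
        rw [hV, Matrix.mul_one, diagonal_mul_diagonal]
        congr 3
        funext i
        simp only [Function.comp_apply, ← RCLike.ofReal_mul]
        rw [Real.mul_self_sqrt (hA.eigenvalues_nonneg i)]
    _ = A := by
        conv_rhs => rw [hA.1.spectral_theorem, Unitary.conjStarAlgAut_apply]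

end SqrtAux

section Aux

variable {d : ℕ}

private lemma frob_norm_sq (A : Matrix (Fin d) (Fin d) ℝ) :
    ‖A‖ ^ 2 = (Aᵀ * A).trace := by
  rw [frobenius_norm_def, ← Real.rpow_natCast ((∑ i, ∑ j, ‖A i j‖ ^ (2:ℝ)) ^ (1/2:ℝ)) 2,
    ← Real.rpow_mul (by positivity)]
  norm_num
  rw [Matrix.trace]
  simp only [Matrix.diag, Matrix.mul_apply, Matrix.transpose_apply]
  rw [Finset.sum_comm]
  congr 1; ext i; congr 1; ext j
  rw [sq]

private lemma norm_mul_orth (Q A : Matrix (Fin d) (Fin d) ℝ) (hQ : Qᵀ * Q = 1) :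
    ‖Q * A‖ = ‖A‖ := by
  have h1 : ‖Q * A‖ ^ 2 = ‖A‖ ^ 2 := by
    rw [frob_norm_sq, frob_norm_sq, Matrix.transpose_mul]
    congr 1
    calc Aᵀ * Qᵀ * (Q * A) = Aᵀ * (Qᵀ * Q) * A := by noncomm_ring
    _ = Aᵀ * A := by rw [hQ, Matrix.mul_one]
  calc ‖Q * A‖ = Real.sqrt (‖Q * A‖ ^ 2) := (Real.sqrt_sq (norm_nonneg _)).symm
  _ = Real.sqrt (‖A‖ ^ 2) := by rw [h1]
  _ = ‖A‖ := Real.sqrt_sq (norm_nonneg _)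

private lemma trace_mul_orth_le {U S : Matrix (Fin d) (Fin d) ℝ} (hU : U.PosSemidef)
    (hS : Sᵀ * S = 1) : (U * S).trace ≤ U.trace := by
  set W := hU.sqrt with hWdef
  have hW2 : W * W = U := hU.sqrt_mul_self
  have hWsym : Wᵀ = W := by
    have := hU.posSemidef_sqrt.1
    rwa [Matrix.IsHermitian, Matrix.conjTranspose_eq_transpose_of_trivial] at this
  have hWsym' : ∀ a b, W a b = W b a := fun a b => by
    rw [← Matrix.transpose_apply W a b, hWsym]
  have key : ∀ i : Fin d, (W * S * W) i i ≤ U i i := by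
    intro i
    set v : Fin d → ℝ := fun k => W i k with hv
    have hL : (W * S * W) i i = v ⬝ᵥ (S *ᵥ v) := by
      simp only [Matrix.mul_apply, dotProduct, Matrix.mulVec, dotProduct,
        Finset.sum_mul, Finset.mul_sum]
      rw [Finset.sum_comm]
      refine Finset.sum_congr rfl fun k _ => Finset.sum_congr rfl fun l _ => ?_
      rw [hWsym' l i]; ring
    have hR : U i i = v ⬝ᵥ v := by
      rw [← hW2]
      simp only [Matrix.mul_apply, dotProduct]
      refine Finset.sum_congr rfl fun k _ => ?_
      rw [hWsym' k i]
    have hSv : (S *ᵥ v) ⬝ᵥ (S *ᵥ v) = v ⬝ᵥ v := by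
      rw [Matrix.dotProduct_mulVec]
      have : (S *ᵥ v) ᵥ* S = v := by
        rw [← Matrix.mulVec_transpose, Matrix.mulVec_mulVec, hS, Matrix.one_mulVec]
      rw [this]
    have hcs : (v ⬝ᵥ (S *ᵥ v)) ^ 2 ≤ (v ⬝ᵥ v) * ((S *ᵥ v) ⬝ᵥ (S *ᵥ v)) := by
      have := Finset.sum_mul_sq_le_sq_mul_sq Finset.univ v (S *ᵥ v)
      simpa [dotProduct, sq, Finset.mul_sum] using this
    have hvv : 0 ≤ v ⬝ᵥ v := Finset.sum_nonneg fun k _ => mul_self_nonneg _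
    rw [hL, hR]
    nlinarith [hcs, hSv, hvv]
  have htr : (U * S).trace = (W * S * W).trace := by
    rw [← hW2, Matrix.mul_assoc, Matrix.trace_mul_comm, Matrix.mul_assoc]
  rw [htr, Matrix.trace, Matrix.trace]
  exact Finset.sum_le_sum fun i _ => key i

end Aux

/-- For `F` with positive determinant, the Frobenius distance of `F` to `SO(d)`
equals `‖√(Fᵀ F) − I‖`, where `√(Fᵀ F)` is the positive semidefinite square root. -/
theorem stmt_5 {d : ℕ} (hd : 2 ≤ d) (F : Matrix (Fin d) (Fin d) ℝ) (hF : 0 < F.det)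
    (h : (Fᵀ * F).PosSemidef) :
    Metric.infDist F {R : Matrix (Fin d) (Fin d) ℝ | Rᵀ * R = 1 ∧ R.det = 1}
      = ‖h.sqrt - 1‖ := by
  set U := h.sqrt with hUdef
  have hU : U.PosSemidef := h.posSemidef_sqrt
  have hUsym : Uᵀ = U := by
    have := hU.1
    rwa [Matrix.IsHermitian, Matrix.conjTranspose_eq_transpose_of_trivial] at this
  have hUU : U * U = Fᵀ * F := h.sqrt_mul_self
  -- determinant of U
  have hdetU0 : 0 ≤ U.det := by
    rw [hU.isHermitian.det_eq_prod_eigenvalues]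
    refine Finset.prod_nonneg fun i _ => ?_
    simpa using hU.eigenvalues_nonneg i
  have hdetsq : U.det ^ 2 = F.det ^ 2 := by
    have := congrArg Matrix.det hUU
    rwa [Matrix.det_mul, Matrix.det_mul, Matrix.det_transpose, ← sq, ← sq] at this
  have hdetU : U.det = F.det := by nlinarith
  have hUunit : IsUnit U.det := by rw [hdetU]; exact (ne_of_gt hF).isUnit
  have hUiU : U⁻¹ * U = 1 := Matrix.nonsing_inv_mul U hUunit
  have hUUi : U * U⁻¹ = 1 := Matrix.mul_nonsing_inv U hUunit
  set R := F * U⁻¹ with hRdef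
  have hRU : R * U = F := by rw [hRdef, Matrix.mul_assoc, hUiU, Matrix.mul_one]
  have hRtR : Rᵀ * R = 1 := by
    rw [hRdef, Matrix.transpose_mul, Matrix.transpose_nonsing_inv, hUsym]
    calc U⁻¹ * Fᵀ * (F * U⁻¹) = U⁻¹ * (Fᵀ * F) * U⁻¹ := by noncomm_ring
    _ = U⁻¹ * (U * U) * U⁻¹ := by rw [hUU]
    _ = (U⁻¹ * U) * (U * U⁻¹) := by noncomm_ring
    _ = 1 := by rw [hUiU, hUUi, Matrix.mul_one]
  have hRdet : R.det = 1 := by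
    have := congrArg Matrix.det hRU
    rw [Matrix.det_mul, hdetU] at this
    field_simp at this ⊢
    nlinarith [this]
  have hRmem : R ∈ {R : Matrix (Fin d) (Fin d) ℝ | Rᵀ * R = 1 ∧ R.det = 1} := ⟨hRtR, hRdet⟩
  -- lower bound on dist to any Q in SO(d)
  have hlow : ∀ Q : Matrix (Fin d) (Fin d) ℝ,
      Q ∈ {R : Matrix (Fin d) (Fin d) ℝ | Rᵀ * R = 1 ∧ R.det = 1} →
      ‖U - 1‖ ≤ dist F Q := by
    intro Q hQ
    obtain ⟨hQ1, _⟩ := hQ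
    rw [dist_eq_norm]
    have hRRt : R * Rᵀ = 1 := mul_eq_one_comm.mp hRtR
    have hStS : (Rᵀ * Q)ᵀ * (Rᵀ * Q) = 1 := by
      rw [Matrix.transpose_mul, Matrix.transpose_transpose]
      calc Qᵀ * R * (Rᵀ * Q) = Qᵀ * (R * Rᵀ) * Q := by noncomm_ring
      _ = Qᵀ * Q := by rw [hRRt, Matrix.mul_one]
      _ = 1 := hQ1
    have hkey : (Fᵀ * Q).trace ≤ U.trace := by
      have hFt : Fᵀ = U * Rᵀ := by
        rw [← hRU, Matrix.transpose_mul, hUsym]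
      rw [hFt, Matrix.mul_assoc]
      exact trace_mul_orth_le hU hStS
    have e1 : ‖F - Q‖ ^ 2 = (Fᵀ * F).trace - 2 * (Fᵀ * Q).trace + (Qᵀ * Q).trace := by
      rw [frob_norm_sq]
      have hexp : (F - Q)ᵀ * (F - Q) = Fᵀ * F - Fᵀ * Q - Qᵀ * F + Qᵀ * Q := by
        rw [Matrix.transpose_sub]; noncomm_ring
      rw [hexp, Matrix.trace_add, Matrix.trace_sub, Matrix.trace_sub]
      have : (Qᵀ * F).trace = (Fᵀ * Q).trace := by
        rw [← Matrix.trace_transpose (Qᵀ * F), Matrix.transpose_mul, Matrix.transpose_transpose]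
      rw [this]; ring
    have e2 : ‖U - 1‖ ^ 2 = (Fᵀ * F).trace - 2 * U.trace + (Qᵀ * Q).trace := by
      rw [frob_norm_sq]
      have hexp : (U - 1)ᵀ * (U - 1) = U * U - U - U + 1 := by
        rw [Matrix.transpose_sub, Matrix.transpose_one, hUsym]
        noncomm_ring
      rw [hexp, Matrix.trace_add, Matrix.trace_sub, Matrix.trace_sub, hUU, hQ1]
      ring
    nlinarith [norm_nonneg (F - Q), norm_nonneg (U - 1), hkey, e1, e2]
  refine le_antisymm ?_ ?_
  · have : dist F R = ‖U - 1‖ := by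
      rw [dist_eq_norm]
      calc ‖F - R‖ = ‖R * U - R * 1‖ := by rw [hRU, Matrix.mul_one]
      _ = ‖R * (U - 1)‖ := by rw [Matrix.mul_sub]
      _ = ‖U - 1‖ := norm_mul_orth R (U - 1) hRtR
    rw [← this]
    exact Metric.infDist_le_dist_of_mem hRmem
  · by_contra hc
    push_neg at hc
    rw [Metric.infDist_lt_iff ⟨R, hRmem⟩] at hc
    obtain ⟨Q, hQmem, hQlt⟩ := hc
    exact absurd hQlt (not_lt.mpr (hlow Q hQmem))
end
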